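/- Let d ≥ 1, n ≥ 1, let x₁, …, x_n ∈ ℝ^d and r₁, …, r_n ∈ {0,1}^d be such that every column has at least one observed entry and at least one row is fully observed. Define the componentwise available-case mean m ∈ ℝ^d by m_k = (Σ_j r_{jk} x_{jk}) / (Σ_j r_{jk}); the mean-imputed observations x̃_j = x_j ⊙ r_j + m ⊙ (1 - r_j); the complete-case mean c = (Σ_j W_j x_j)/(Σ_j W_j) and complete-case covariance Σ̃ = (1/Σ_j W_j) Σ_j W_j (x_j - c)(x_j - c)ᵀ, where W_j = Π_k r_{jk}; and assume Σ̃ is positive definite. Then the imputed BHEP V-statistic Ṽ_n = (1/n²) Σ_{j,k} h(x̃_j, x̃_k; (m, Σ̃)), with h(x,y;(μ,Σ)) = exp(-(1/2)(x-y)ᵀΣ^{-1}(x-y)) - 2^{-d/2} exp(-(1/4)(x-μ)ᵀΣ^{-1}(x-μ)) - 2^{-d/2} exp(-(1/4)(y-μ)ᵀΣ^{-1}(y-μ)) + 3^{-d/2}, is translation invariant: replacing every x_j by x_j + b for any b ∈ ℝ^d (with the same response indicators r_j) leaves Ṽ_n unchanged. -/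
import Mathlib


open Real Matrix

/-- Indicator that row `j` is fully observed: `W_j = ∏_k r_{jk}`. -/
noncomputable def rowObs {d n : ℕ} (r : Fin n → Fin d → ℝ) (j : Fin n) : ℝ :=
  ∏ i, r j i

/-- Componentwise available-case mean: `m_k = (∑_j r_{jk} x_{jk}) / (∑_j r_{jk})`. -/
noncomputable def acMean {d n : ℕ} (x r : Fin n → Fin d → ℝ) : Fin d → ℝ :=
  fun k => (∑ j, r j k * x j k) / (∑ j, r j k)

/-- Mean-imputed observations: `x̃_j = x_j ⊙ r_j + m ⊙ (1 - r_j)`. -/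
noncomputable def imputed {d n : ℕ} (x r : Fin n → Fin d → ℝ) (j : Fin n) : Fin d → ℝ :=
  fun i => x j i * r j i + acMean x r i * (1 - r j i)

/-- Complete-case mean: `c = (∑_j W_j x_j)/(∑_j W_j)`. -/
noncomputable def ccMean {d n : ℕ} (x r : Fin n → Fin d → ℝ) : Fin d → ℝ :=
  fun i => (∑ j, rowObs r j * x j i) / (∑ j, rowObs r j)

/-- Complete-case covariance: `Σ̃ = (1/∑_j W_j) ∑_j W_j (x_j - c)(x_j - c)ᵀ`. -/
noncomputable def ccCov {d n : ℕ} (x r : Fin n → Fin d → ℝ) : Matrix (Fin d) (Fin d) ℝ :=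
  (∑ j, rowObs r j)⁻¹ • ∑ j, rowObs r j • vecMulVec (x j - ccMean x r) (x j - ccMean x r)

/-- The BHEP kernel `h(x,y;(μ,Σ))`, expressed through `Σ⁻¹`. -/
noncomputable def bhepKernel (d : ℕ) (μ : Fin d → ℝ) (Sinv : Matrix (Fin d) (Fin d) ℝ)
    (x y : Fin d → ℝ) : ℝ :=
  Real.exp (-(1 / 2) * ((x - y) ⬝ᵥ (Sinv *ᵥ (x - y))))
    - (2 : ℝ) ^ (-(d : ℝ) / 2) * Real.exp (-(1 / 4) * ((x - μ) ⬝ᵥ (Sinv *ᵥ (x - μ))))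
    - (2 : ℝ) ^ (-(d : ℝ) / 2) * Real.exp (-(1 / 4) * ((y - μ) ⬝ᵥ (Sinv *ᵥ (y - μ))))
    + (3 : ℝ) ^ (-(d : ℝ) / 2)

/-- The imputed BHEP V-statistic `Ṽ_n = (1/n²) ∑_{j,k} h(x̃_j, x̃_k; (m, Σ̃))`. -/
noncomputable def imputedVStat (d n : ℕ) (x r : Fin n → Fin d → ℝ) : ℝ :=
  ((n : ℝ) ^ 2)⁻¹ * ∑ j, ∑ k,
    bhepKernel d (acMean x r) (ccCov x r)⁻¹ (imputed x r j) (imputed x r k)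


lemma bhep_shift (d : ℕ) (μ : Fin d → ℝ) (S : Matrix (Fin d) (Fin d) ℝ)
    (x y b : Fin d → ℝ) :
    bhepKernel d (fun i => μ i + b i) S (fun i => x i + b i) (fun i => y i + b i)
      = bhepKernel d μ S x y := by
  unfold bhepKernel
  have h1 : (fun i => x i + b i) - (fun i => y i + b i) = x - y := by
    funext i; simp
  have h2 : (fun i => x i + b i) - (fun i => μ i + b i) = x - μ := by
    funext i; simp
  have h3 : (fun i => y i + b i) - (fun i => μ i + b i) = y - μ := by
    funext i; simp
  rw [h1, h2, h3]

/-- Translation invariance of the imputed BHEP V-statistic: if every column has at least one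
observed entry, at least one row is fully observed, and the complete-case covariance `Σ̃` is
positive definite, then replacing every `x_j` by `x_j + b` (with the same response
indicators) leaves `Ṽ_n` unchanged. -/
theorem imputed_bhep_translation_invariance (d n : ℕ) (hd : 1 ≤ d) (hn : 1 ≤ n)
    (x : Fin n → Fin d → ℝ) (r : Fin n → Fin d → ℝ)
    (hr01 : ∀ j i, r j i = 0 ∨ r j i = 1)
    (hcol : ∀ i, ∃ j, r j i = 1)
    (hrow : ∃ j, ∀ i, r j i = 1)
    (hpos : (ccCov x r).PosDef)
    (b : Fin d → ℝ) :
    imputedVStat d n (fun j => x j + b) r = imputedVStat d n x r := by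
  have hcolpos : ∀ i, (∑ j, r j i) ≠ 0 := by
    intro i
    obtain ⟨j, hj⟩ := hcol i
    have h1 : (1:ℝ) ≤ ∑ j', r j' i := by
      calc (1:ℝ) = r j i := hj.symm
        _ ≤ ∑ j', r j' i := Finset.single_le_sum (f := fun j' => r j' i)
            (fun j' _ => by show (0:ℝ) ≤ r j' i; rcases hr01 j' i with h|h <;> rw [h] <;> norm_num)
            (Finset.mem_univ j)
    intro h; rw [h] at h1; linarith
  have hrowpos : (∑ j, rowObs r j) ≠ 0 := by
    obtain ⟨j, hj⟩ := hrow
    have h1 : rowObs r j = 1 := by simp [rowObs, hj]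
    have h2 : (1:ℝ) ≤ ∑ j', rowObs r j' := by
      calc (1:ℝ) = rowObs r j := h1.symm
        _ ≤ ∑ j', rowObs r j' := Finset.single_le_sum
            (fun j' _ => Finset.prod_nonneg
              (fun i _ => by rcases hr01 j' i with h|h <;> simp [h])) (Finset.mem_univ j)
    intro h; rw [h] at h2; linarith
  have hm : acMean (fun j => x j + b) r = fun i => acMean x r i + b i := by
    funext i
    simp only [acMean, Pi.add_apply]
    rw [show (∑ j, r j i * (x j i + b i)) = (∑ j, r j i * x j i) + (∑ j, r j i) * b i by
      rw [Finset.sum_mul, ← Finset.sum_add_distrib]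
      exact Finset.sum_congr rfl (fun j _ => by ring)]
    rw [add_div, mul_div_cancel_left₀ _ (hcolpos i)]
  have himp : ∀ j, imputed (fun j => x j + b) r j = fun i => imputed x r j i + b i := by
    intro j; funext i
    simp only [imputed, Pi.add_apply, hm]
    ring
  have hc : ccMean (fun j => x j + b) r = fun i => ccMean x r i + b i := by
    funext i
    simp only [ccMean, Pi.add_apply]
    rw [show (∑ j, rowObs r j * (x j i + b i))
        = (∑ j, rowObs r j * x j i) + (∑ j, rowObs r j) * b i by
      rw [Finset.sum_mul, ← Finset.sum_add_distrib]
      exact Finset.sum_congr rfl (fun j _ => by ring)]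
    rw [add_div, mul_div_cancel_left₀ _ hrowpos]
  have hcov : ccCov (fun j => x j + b) r = ccCov x r := by
    unfold ccCov
    congr 1
    refine Finset.sum_congr rfl (fun j _ => ?_)
    rw [hc]
    have hv : (x j + b - fun i => ccMean x r i + b i) = x j - ccMean x r := by
      funext i; simp only [Pi.add_apply, Pi.sub_apply]; ring
    rw [hv]
  unfold imputedVStat
  rw [hcov]
  congr 1
  refine Finset.sum_congr rfl (fun j _ => Finset.sum_congr rfl (fun k _ => ?_))
  rw [hm, himp j, himp k, bhep_shift]
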